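/- Let T be a semistandard Young tableau of content s = s₁⋯s_{ℓ₁} and T′ a semistandard Young tableau of content t = t₁⋯t_{ℓ₂} (both of rectangular shape with 3 columns), and let 1 ≤ i ≤ ℓ₁. Then the shuffle T′ ↦ⁱ T is a semistandard Young tableau of rectangular 3-column shape with content equal to the concatenated sign string s₁⋯s_i t₁⋯t_{ℓ₂} s_{i+1}⋯s_{ℓ₁}. -/

import Mathlib

/-!
STATEMENT 7: Let `T` be a semistandard Young tableau of content `s = s₁⋯s_{ℓ₁}` and
`T'` a semistandard Young tableau of content `t = t₁⋯t_{ℓ₂}` (both of rectangular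
3-column shape), and let `1 ≤ i ≤ ℓ₁`.  Then the shuffle `T' ↦ⁱ T` is a semistandard
Young tableau of rectangular 3-column shape with content equal to the concatenated sign
string `s₁⋯s_i t₁⋯t_{ℓ₂} s_{i+1}⋯s_{ℓ₁}`.

A sign string is encoded as `s : ℕ → Bool` (`s v = true` meaning position `v` is a
minus), only positions `1, …, ℓ` being relevant; a tableau with `n` rows of length `3`
is encoded as `T : Fin n → Fin 3 → ℕ`.  The shuffle is built column by column: the
entries `j ≤ i` of `T` keep their label and column, the entries `j` of `T'` are
relabeled `j + i` keeping their column, the entries `j > i` of `T` are relabeled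
`j + ℓ₂` keeping their column, and each column is arranged in increasing order.
-/

/-- The number of boxes of `T` containing the value `v`. -/
def tabCount (n : ℕ) (T : Fin n → Fin 3 → ℕ) (v : ℕ) : ℕ :=
  (Finset.univ.filter (fun p : Fin n × Fin 3 => T p.1 p.2 = v)).card

/-- The multiplicity of the value `v` prescribed by the sign string `s`. -/
def multOf (s : ℕ → Bool) (v : ℕ) : ℕ := if s v then 2 else 1

/-- `T` is a semistandard Young tableau of rectangular 3-column shape whose content is
the sign string `s` of length `ℓ`: rows weakly increase, columns strictly increase,
entries lie in `{1, …, ℓ}` and the value `v` occurs exactly `multOf s v` times. -/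
def IsTableauOfContent (n ℓ : ℕ) (s : ℕ → Bool) (T : Fin n → Fin 3 → ℕ) : Prop :=
  (∀ r : Fin n, ∀ c c' : Fin 3, c ≤ c' → T r c ≤ T r c') ∧
  (∀ r r' : Fin n, r < r' → ∀ c : Fin 3, T r c < T r' c) ∧
  (∀ (r : Fin n) (c : Fin 3), 1 ≤ T r c ∧ T r c ≤ ℓ) ∧
  (∀ v, 1 ≤ v → v ≤ ℓ → tabCount n T v = multOf s v)

/-- The multiset of (relabeled) entries placed in column `c` of the shuffle
`T' ↦ⁱ T`. -/
def shuffleColumn (n₁ n₂ ℓ₂ i : ℕ) (T : Fin n₁ → Fin 3 → ℕ)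
    (T' : Fin n₂ → Fin 3 → ℕ) (c : Fin 3) : Multiset ℕ :=
  (Finset.univ.val.map fun r : Fin n₁ => if T r c ≤ i then T r c else T r c + ℓ₂) +
    (Finset.univ.val.map fun r : Fin n₂ => T' r c + i)

/-- The shuffle `T' ↦ⁱ T`: each column consists of the prescribed relabeled entries,
arranged in increasing order from top to bottom. -/
def shuffle (n₁ n₂ ℓ₂ i : ℕ) (T : Fin n₁ → Fin 3 → ℕ) (T' : Fin n₂ → Fin 3 → ℕ) :
    Fin (n₁ + n₂) → Fin 3 → ℕ :=
  fun r c => ((shuffleColumn n₁ n₂ ℓ₂ i T T' c).sort (· ≤ ·)).getD (r : ℕ) 0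

/-- The concatenated sign string `s₁⋯s_i t₁⋯t_{ℓ₂} s_{i+1}⋯s_{ℓ₁}`. -/
def concatSign (ℓ₂ i : ℕ) (s t : ℕ → Bool) : ℕ → Bool :=
  fun v => if v ≤ i then s v else if v ≤ i + ℓ₂ then t (v - i) else s (v - ℓ₂)

/-! Relabel `T` by the strictly increasing map `shiftAbove i ℓ₂` and `T'` by `· + i`: both
relabelled tableaux still have weakly increasing rows and strictly increasing columns, and
their alphabets are disjoint.  Column `c` of the shuffle is the sorted union of the columns `c`
of the two relabelled tableaux.  The `k`-th smallest element of a multiset `A` is `≤ x` iff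
more than `k` elements of `A` are `≤ x`, so the entrywise domination of column `c` by column
`c'` passes to the sorted union, giving weakly increasing rows; disjointness makes each union
duplicate-free, so its sorted list increases strictly.  The content is additive over the
two relabelled tableaux, each of which carries the content of the original one, shifted. -/

open Finset

theorem List.SortedLE.getElem_le_iff_lt_countP {α : Type*} [LinearOrder α] {L : List α}
    (hL : L.SortedLE) {k : ℕ} (hk : k < L.length) (x : α) :
    L[k] ≤ x ↔ k < L.countP (· ≤ x) := by
  have mono := List.sortedLE_iff_getElem_le_getElem_of_le.1 hL
  constructor
  · intro hkx
    have htake : (L.take (k + 1)).countP (· ≤ x) = k + 1 := by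
      rw [List.countP_eq_length.2, List.length_take]
      · omega
      intro a ha
      obtain ⟨j, hj, rfl⟩ := List.getElem_of_mem ha
      rw [List.length_take] at hj
      simpa only [List.getElem_take, decide_eq_true_eq] using (mono (by omega)).trans hkx
    have := (L.take_sublist (k + 1)).countP_le (p := fun a => decide (a ≤ x))
    omega
  · intro hcount
    by_contra! hxk
    have hdrop : (L.drop k).countP (· ≤ x) = 0 := by
      rw [List.countP_eq_zero]
      intro a ha
      obtain ⟨j, hj, rfl⟩ := List.getElem_of_mem ha
      rw [List.length_drop] at hj
      simpa only [List.getElem_drop, decide_eq_true_eq, not_le] using hxk.trans_le (mono (by omega))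
    have htake : (L.take k).countP (· ≤ x) ≤ k :=
      List.countP_le_length.trans (List.length_take_le _ _)
    rw [← L.take_append_drop k, List.countP_append] at hcount
    omega

namespace Multiset

variable {α : Type*} [LinearOrder α]

theorem sort_getD_le_iff {s : Multiset α} {k : ℕ} (hk : k < card s) (d x : α) :
    (s.sort).getD k d ≤ x ↔ k < s.countP (· ≤ x) := by
  have hk' : k < (s.sort).length := by rwa [length_sort]
  conv_rhs => rw [← sort_eq s (· ≤ ·), coe_countP]
  rw [List.getD_eq_getElem _ _ hk']
  exact (pairwise_sort s (· ≤ ·)).sortedLE.getElem_le_iff_lt_countP hk' x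

theorem sort_getD_le_sort_getD {s t : Multiset α}
    (h : ∀ x, t.countP (· ≤ x) ≤ s.countP (· ≤ x)) {k : ℕ} (hs : k < card s) (ht : k < card t)
    (d : α) : (s.sort).getD k d ≤ (t.sort).getD k d :=
  (sort_getD_le_iff hs d _).2 (((sort_getD_le_iff ht d _).1 le_rfl).trans_le (h _))

theorem sort_getD_lt_sort_getD {s : Multiset α} (hs : s.Nodup) {j k : ℕ} (hjk : j < k)
    (hk : k < card s) (d : α) : (s.sort).getD j d < (s.sort).getD k d := by
  have hsort : (s.sort).SortedLT :=
    (pairwise_sort s (· ≤ ·)).sortedLE.sortedLT_of_nodup (by rwa [← coe_nodup, sort_eq])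
  have hk' : k < (s.sort).length := by rwa [length_sort]
  rw [List.getD_eq_getElem _ _ (hjk.trans hk'), List.getD_eq_getElem _ _ hk']
  exact List.sortedLT_iff_getElem_lt_getElem_of_lt.1 hsort hjk

end Multiset

theorem Fin.univ_val_map_getD {α : Type*} {L : List α} {N : ℕ} (h : L.length = N) (d : α) :
    (univ.val.map fun r : Fin N => L.getD r d) = (L : Multiset α) := by
  subst h
  rw [Fin.univ_val_map]
  congr 1
  exact List.ext_getElem (by simp) fun k _ _ => by simp

section Tableau

variable {n : ℕ}

def tabColumn (S : Fin n → Fin 3 → ℕ) (c : Fin 3) : Multiset ℕ :=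
  univ.val.map (S · c)

theorem tabCount_eq_sum_count_tabColumn (S : Fin n → Fin 3 → ℕ) (v : ℕ) :
    tabCount n S v = ∑ c, (tabColumn S c).count v := by
  rw [tabCount, card_filter, Fintype.sum_prod_type, sum_comm]
  refine sum_congr rfl fun c _ => ?_
  rw [tabColumn, Multiset.count_map, ← filter_val, card_val, card_filter]
  simp only [eq_comm]

theorem tabCount_comp_of_injective {φ : ℕ → ℕ} (hφ : Function.Injective φ)
    (S : Fin n → Fin 3 → ℕ) {v w : ℕ} (h : φ w = v) :
    tabCount n (fun r c => φ (S r c)) v = tabCount n S w := by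
  simp only [tabCount, ← h, hφ.eq_iff]

theorem tabCount_eq_zero {S : Fin n → Fin 3 → ℕ} {v : ℕ} (h : ∀ r c, S r c ≠ v) :
    tabCount n S v = 0 := by
  simpa [tabCount, filter_eq_empty_iff] using h

theorem tabColumn_nodup {S : Fin n → Fin 3 → ℕ} {c : Fin 3}
    (h : ∀ r r', r < r' → S r c < S r' c) : (tabColumn S c).Nodup :=
  univ.nodup.map (StrictMono.injective fun _ _ hr => h _ _ hr)

theorem countP_tabColumn_le {S : Fin n → Fin 3 → ℕ} {c c' : Fin 3}
    (h : ∀ r, S r c ≤ S r c') (x : ℕ) :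
    (tabColumn S c').countP (· ≤ x) ≤ (tabColumn S c).countP (· ≤ x) := by
  simp only [tabColumn, Multiset.countP_map]
  exact Multiset.card_le_card (Multiset.monotone_filter_right _ fun r hr => (h r).trans hr)

end Tableau

def shiftAbove (i ℓ v : ℕ) : ℕ := if v ≤ i then v else v + ℓ

theorem shiftAbove_strictMono (i ℓ : ℕ) : StrictMono (shiftAbove i ℓ) := by
  intro a b hab
  unfold shiftAbove
  split_ifs <;> omega

theorem shiftAbove_le_or_lt (i ℓ v : ℕ) : shiftAbove i ℓ v ≤ i ∨ i + ℓ < shiftAbove i ℓ v := by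
  unfold shiftAbove
  split_ifs <;> omega

section Shuffle

variable {n₁ n₂ ℓ₁ ℓ₂ i : ℕ} {T : Fin n₁ → Fin 3 → ℕ} {T' : Fin n₂ → Fin 3 → ℕ}

theorem shuffleColumn_eq (c : Fin 3) : shuffleColumn n₁ n₂ ℓ₂ i T T' c =
    tabColumn (fun r c => shiftAbove i ℓ₂ (T r c)) c + tabColumn (fun r c => T' r c + i) c :=
  rfl

theorem card_shuffleColumn (c : Fin 3) :
    Multiset.card (shuffleColumn n₁ n₂ ℓ₂ i T T' c) = n₁ + n₂ := by
  simp [shuffleColumn]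

theorem tabColumn_shuffle (c : Fin 3) :
    tabColumn (shuffle n₁ n₂ ℓ₂ i T T') c = shuffleColumn n₁ n₂ ℓ₂ i T T' c := by
  unfold tabColumn shuffle
  rw [Fin.univ_val_map_getD (by rw [Multiset.length_sort, card_shuffleColumn]),
    Multiset.sort_eq]

theorem shuffle_mem_shuffleColumn (r : Fin (n₁ + n₂)) (c : Fin 3) :
    shuffle n₁ n₂ ℓ₂ i T T' r c ∈ shuffleColumn n₁ n₂ ℓ₂ i T T' c :=
  tabColumn_shuffle (T := T) c ▸ Multiset.mem_map_of_mem _ (mem_univ_val r)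

theorem tabCount_shuffle (v : ℕ) :
    tabCount (n₁ + n₂) (shuffle n₁ n₂ ℓ₂ i T T') v =
      tabCount n₁ (fun r c => shiftAbove i ℓ₂ (T r c)) v +
        tabCount n₂ (fun r c => T' r c + i) v := by
  simp only [tabCount_eq_sum_count_tabColumn, tabColumn_shuffle, shuffleColumn_eq,
    Multiset.count_add, sum_add_distrib]

theorem shuffle_le_shuffle {c c' : Fin 3} (hT : ∀ r, T r c ≤ T r c')
    (hT' : ∀ r, T' r c ≤ T' r c') (r : Fin (n₁ + n₂)) :
    shuffle n₁ n₂ ℓ₂ i T T' r c ≤ shuffle n₁ n₂ ℓ₂ i T T' r c' := by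
  refine Multiset.sort_getD_le_sort_getD (fun x => ?_) (by simp [card_shuffleColumn])
    (by simp [card_shuffleColumn]) 0
  simp only [shuffleColumn_eq, Multiset.countP_add]
  exact add_le_add (countP_tabColumn_le (fun r => (shiftAbove_strictMono i ℓ₂).monotone (hT r)) x)
    (countP_tabColumn_le (fun r => Nat.add_le_add_right (hT' r) i) x)

theorem shuffleColumn_nodup {c : Fin 3} (hT : ∀ r r', r < r' → T r c < T r' c)
    (hT' : ∀ r r', r < r' → T' r c < T' r' c) (hT'bd : ∀ r, 1 ≤ T' r c ∧ T' r c ≤ ℓ₂) :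
    (shuffleColumn n₁ n₂ ℓ₂ i T T' c).Nodup := by
  rw [shuffleColumn_eq, Multiset.nodup_add]
  refine ⟨tabColumn_nodup fun r r' h => shiftAbove_strictMono i ℓ₂ (hT r r' h),
    tabColumn_nodup fun r r' h => Nat.add_lt_add_right (hT' r r' h) i, ?_⟩
  simp only [Multiset.disjoint_left, tabColumn, Multiset.mem_map, mem_univ_val, true_and]
  rintro _ ⟨r, rfl⟩ ⟨r', hr'⟩
  have := shiftAbove_le_or_lt i ℓ₂ (T r c)
  have := hT'bd r'
  omega

theorem shuffle_lt_shuffle {c : Fin 3} (hT : ∀ r r', r < r' → T r c < T r' c)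
    (hT' : ∀ r r', r < r' → T' r c < T' r' c) (hT'bd : ∀ r, 1 ≤ T' r c ∧ T' r c ≤ ℓ₂)
    {r r' : Fin (n₁ + n₂)} (h : r < r') :
    shuffle n₁ n₂ ℓ₂ i T T' r c < shuffle n₁ n₂ ℓ₂ i T T' r' c :=
  Multiset.sort_getD_lt_sort_getD (shuffleColumn_nodup hT hT' hT'bd) h
    (by simp [card_shuffleColumn]) 0

theorem shuffle_mem_Icc (hi : i ≤ ℓ₁) (hT : ∀ r c, 1 ≤ T r c ∧ T r c ≤ ℓ₁)
    (hT' : ∀ r c, 1 ≤ T' r c ∧ T' r c ≤ ℓ₂) (r : Fin (n₁ + n₂)) (c : Fin 3) :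
    shuffle n₁ n₂ ℓ₂ i T T' r c ∈ Set.Icc 1 (ℓ₁ + ℓ₂) := by
  have hmem := shuffle_mem_shuffleColumn (ℓ₂ := ℓ₂) (i := i) (T := T) (T' := T') r c
  simp only [shuffleColumn_eq, tabColumn, Multiset.mem_add, Multiset.mem_map, mem_univ_val,
    true_and] at hmem
  rw [Set.mem_Icc]
  rcases hmem with ⟨r', hr'⟩ | ⟨r', hr'⟩
  · have := hT r' c
    unfold shiftAbove at hr'
    split_ifs at hr' <;> omega
  · have := hT' r' c
    omega

theorem tabCount_shuffle_eq_multOf {s t : ℕ → Bool} (hi : i ≤ ℓ₁)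
    (hT'bd : ∀ r c, 1 ≤ T' r c ∧ T' r c ≤ ℓ₂)
    (hT : ∀ v, 1 ≤ v → v ≤ ℓ₁ → tabCount n₁ T v = multOf s v)
    (hT' : ∀ v, 1 ≤ v → v ≤ ℓ₂ → tabCount n₂ T' v = multOf t v)
    {v : ℕ} (hv₁ : 1 ≤ v) (hv₂ : v ≤ ℓ₁ + ℓ₂) :
    tabCount (n₁ + n₂) (shuffle n₁ n₂ ℓ₂ i T T') v = multOf (concatSign ℓ₂ i s t) v := by
  have hφ := (shiftAbove_strictMono i ℓ₂).injective
  rw [tabCount_shuffle]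
  rcases le_or_gt v i with hvi | hvi
  · rw [tabCount_comp_of_injective hφ T (w := v) (if_pos hvi),
      tabCount_eq_zero (n := n₂) fun r c => by have := hT'bd r c; omega, add_zero,
      hT v hv₁ (hvi.trans hi)]
    simp only [multOf, concatSign, if_pos hvi]
  rcases le_or_gt v (i + ℓ₂) with hvl | hvl
  · rw [tabCount_eq_zero (n := n₁) fun r c => by have := shiftAbove_le_or_lt i ℓ₂ (T r c); omega,
      tabCount_comp_of_injective (add_left_injective i) T' (w := v - i) (by omega), zero_add,
      hT' (v - i) (by omega) (by omega)]
    simp only [multOf, concatSign, if_neg hvi.not_ge, if_pos hvl]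
  · rw [tabCount_comp_of_injective hφ T (w := v - ℓ₂)
        (by rw [shiftAbove, if_neg (by omega)]; omega),
      tabCount_eq_zero (n := n₂) fun r c => by have := hT'bd r c; omega, add_zero,
      hT (v - ℓ₂) (by omega) (by omega)]
    simp only [multOf, concatSign, if_neg hvi.not_ge, if_neg hvl.not_ge]

end Shuffle

theorem shuffle_is_tableau_of_concat_content_general (n₁ n₂ ℓ₁ ℓ₂ i : ℕ)
    (s t : ℕ → Bool) (T : Fin n₁ → Fin 3 → ℕ) (T' : Fin n₂ → Fin 3 → ℕ)
    (hi₂ : i ≤ ℓ₁)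
    (hT : IsTableauOfContent n₁ ℓ₁ s T) (hT' : IsTableauOfContent n₂ ℓ₂ t T') :
    IsTableauOfContent (n₁ + n₂) (ℓ₁ + ℓ₂) (concatSign ℓ₂ i s t)
      (shuffle n₁ n₂ ℓ₂ i T T') := by
  obtain ⟨hTrow, hTcol, hTbd, hTcnt⟩ := hT
  obtain ⟨hT'row, hT'col, hT'bd, hT'cnt⟩ := hT'
  exact ⟨fun r c c' hc =>
      shuffle_le_shuffle (fun r => hTrow r c c' hc) (fun r => hT'row r c c' hc) r,
    fun r r' hr c =>
      shuffle_lt_shuffle (fun r r' h => hTcol r r' h c) (fun r r' h => hT'col r r' h c)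
        (fun r => hT'bd r c) hr,
    shuffle_mem_Icc hi₂ hTbd hT'bd,
    fun v hv₁ hv₂ => tabCount_shuffle_eq_multOf hi₂ hT'bd hTcnt hT'cnt hv₁ hv₂⟩

/-- The shuffle `T' ↦ⁱ T` of semistandard tableaux of contents `s` and `t` is a
semistandard Young tableau of rectangular 3-column shape whose content is the
concatenated sign string `s₁⋯s_i t₁⋯t_{ℓ₂} s_{i+1}⋯s_{ℓ₁}`. -/
theorem shuffle_is_tableau_of_concat_content (n₁ n₂ ℓ₁ ℓ₂ i : ℕ)
    (s t : ℕ → Bool) (T : Fin n₁ → Fin 3 → ℕ) (T' : Fin n₂ → Fin 3 → ℕ)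
    (hi₁ : 1 ≤ i) (hi₂ : i ≤ ℓ₁)
    (hT : IsTableauOfContent n₁ ℓ₁ s T) (hT' : IsTableauOfContent n₂ ℓ₂ t T') :
    IsTableauOfContent (n₁ + n₂) (ℓ₁ + ℓ₂) (concatSign ℓ₂ i s t)
      (shuffle n₁ n₂ ℓ₂ i T T') :=
  shuffle_is_tableau_of_concat_content_general n₁ n₂ ℓ₁ ℓ₂ i s t T T' hi₂ hT hT'
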